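/- arXiv:2003.09861 — 5 statements merged into one kernel-verified Lean document; each statement's English description precedes it below -/
import Mathlib

section
/- The SIDARTHE system is positive: if all eight state variables are nonnegative at time 0, then they remain nonnegative for all t ≥ 0. -/
/-!
Let `m(t)` be the largest negative part of the state at time `t`. At a coordinate realizing it,
each component of the SIDARTHE field is bounded below by `K` times that coordinate: the linear
couplings by monotonicity in the minimal coordinate, the bilinear infection terms using a bound
`M` on the state over `[0, t]`, so that `K` depends on `M`. Hence the right Dini derivative of
`m` is at most `K m`, and Grönwall's inequality with `m(0) = 0` gives `m ≡ 0` on `[0, t]`.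
-/

open Set Filter Topology Finset

theorem frequently_slope_sup'_lt {ι : Type*} [Fintype ι] [Nonempty ι] {y : ι → ℝ → ℝ}
    {y' : ι → ℝ} {t r : ℝ} (hy : ∀ i, HasDerivWithinAt (y i) (y' i) (Ici t) t)
    (hr : ∀ i, (∀ j, y j t ≤ y i t) → y' i < r) :
    ∃ᶠ z in 𝓝[>] t, slope (fun z ↦ univ.sup' univ_nonempty fun i ↦ y i z) t z < r := by
  set f := fun z ↦ univ.sup' univ_nonempty fun i ↦ y i z
  have hle : ∀ i z, y i z ≤ f z := fun i z ↦ le_sup' (fun i ↦ y i z) (mem_univ i)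
  obtain ⟨j, hj⟩ : ∃ j, ∃ᶠ z in 𝓝[>] t, f z = y j z := by
    refine frequently_exists.1 (Frequently.of_forall fun z ↦ ?_)
    obtain ⟨j, -, hj⟩ := exists_mem_eq_sup' univ_nonempty fun i ↦ y i z
    exact ⟨j, hj⟩
  have hjt : f t = y j t := by
    by_contra hne
    have hf : ContinuousWithinAt f (Ici t) t :=
      .finset_sup'_apply _ fun i _ ↦ (hy i).continuousWithinAt
    have hgap : Tendsto (fun z ↦ f z - y j z) (𝓝[>] t) (𝓝 (f t - y j t)) :=
      ((hf.sub (hy j).continuousWithinAt).mono Ioi_subset_Ici_self).tendsto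
    exact hj ((hgap.eventually_ne (sub_ne_zero.2 hne)).mono fun z hz ↦ by
      rwa [sub_ne_zero] at hz)
  have hslope : ∀ᶠ z in 𝓝[>] t, slope (y j) t z < r :=
    (hy j).Ioi_of_Ici.limsup_slope_le' (lt_irrefl t) (hr j fun i ↦ hjt ▸ hle i t)
  refine hj.mp (hslope.mono fun z hz hfz ↦ ?_)
  rwa [slope_def_field, hfz, hjt, ← slope_def_field]

theorem le_zero_of_deriv_le_mul_at_max {ι : Type*} [Fintype ι] [Nonempty ι]
    {y y' : ι → ℝ → ℝ} {K a b : ℝ} (hc : ∀ i, ContinuousOn (y i) (Icc a b))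
    (hy : ∀ i, ∀ t ∈ Ico a b, HasDerivWithinAt (y i) (y' i t) (Ici t) t)
    (hK : ∀ t ∈ Ico a b, ∀ i, (∀ j, y j t ≤ y i t) → y' i t ≤ K * y i t)
    (ha : ∀ i, y i a ≤ 0) : ∀ t ∈ Icc a b, ∀ i, y i t ≤ 0 := by
  set f := fun z ↦ univ.sup' univ_nonempty fun i ↦ y i z
  have hf : ∀ t ∈ Icc a b, f t ≤ gronwallBound 0 K 0 (t - a) := by
    refine le_gronwallBound_of_liminf_deriv_right_le (f' := fun t ↦ K * f t)
      (.finset_sup'_apply _ fun i _ ↦ hc i) (fun t ht r hr ↦ ?_) (sup'_le _ _ fun i _ ↦ ha i)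
      fun _ _ ↦ (add_zero _).ge
    refine frequently_slope_sup'_lt (fun i ↦ hy i t ht) fun i hi ↦ ?_
    have hit : f t = y i t :=
      le_antisymm (sup'_le _ _ fun j _ ↦ hi j) (le_sup' (fun j ↦ y j t) (mem_univ i))
    exact (hK t ht i hi).trans_lt (hit ▸ hr)
  intro t ht i
  simpa [gronwallBound_ε0_δ0] using (le_sup' (fun i ↦ y i t) (mem_univ i)).trans (hf t ht)

/-- A quantitative form of quasi-positivity: on bounded sets, the component of `F v` along a
nonpositive minimal coordinate of `v` is at least a fixed multiple of that coordinate. -/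
def QuasiPositive {ι : Type*} [Fintype ι] (F : (ι → ℝ) → ι → ℝ) : Prop :=
  ∀ M, ∃ K, ∀ v : ι → ℝ, ‖v‖ ≤ M → ∀ i, v i ≤ 0 → (∀ j, v i ≤ v j) → K * v i ≤ F v i

theorem nonneg_of_hasDerivAt_of_quasiPositive {ι : Type*} [Fintype ι] {F : (ι → ℝ) → ι → ℝ}
    (hF : QuasiPositive F) {x : ℝ → ι → ℝ} (hx : ∀ t, HasDerivAt x (F (x t)) t)
    (h0 : 0 ≤ x 0) {t : ℝ} (ht : 0 ≤ t) : 0 ≤ x t := by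
  have hxc : Continuous x := continuous_iff_continuousAt.2 fun s ↦ (hx s).continuousAt
  obtain ⟨M, hM⟩ := isCompact_Icc.exists_bound_of_continuousOn (hxc.continuousOn (s := Icc 0 t))
  obtain ⟨K, hK⟩ := hF M
  -- `none` contributes the constant `0`, so the largest `y o s` is the largest negative part
  let y : Option ι → ℝ → ℝ := fun o s ↦ o.elim 0 fun i ↦ -x s i
  let y' : Option ι → ℝ → ℝ := fun o s ↦ o.elim 0 fun i ↦ -F (x s) i
  have hy : ∀ o s, HasDerivAt (y o) (y' o s) s := by
    rintro (_ | i) s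
    · exact hasDerivAt_const s 0
    · exact (hasDerivAt_pi.1 (hx s) i).neg
  have hmax : ∀ s ∈ Ico 0 t, ∀ o, (∀ p, y p s ≤ y o s) → y' o s ≤ K * y o s := by
    rintro s hs (_ | i) hi
    · simp [y, y']
    · have := hK (x s) (hM s (Ico_subset_Icc_self hs)) i (by simpa [y] using hi none)
        fun j ↦ by simpa [y] using hi (some j)
      simp only [y, y', Option.elim_some, mul_neg]
      linarith
  intro i
  have := le_zero_of_deriv_le_mul_at_max (fun o ↦ (continuous_iff_continuousAt.2 fun s ↦
    (hy o s).continuousAt).continuousOn) (fun o s _ ↦ (hy o s).hasDerivWithinAt) hmax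
    (by rintro (_ | j); exacts [le_rfl, neg_nonpos.2 (h0 j)]) t ⟨ht, le_rfl⟩ (some i)
  simpa [y] using this

theorem le_mul_of_mem_Icc {m M s u : ℝ} (hm : m ≤ 0) (hM : 0 ≤ M) (hs : s ∈ Icc m M)
    (hu : u ∈ Icc m M) : m * M ≤ s * u := by
  obtain ⟨hms, hsM⟩ := hs
  obtain ⟨hmu, huM⟩ := hu
  rcases le_total 0 s with h | h <;> rcases le_total 0 u with h' | h' <;> nlinarith

/-- The SIDARTHE vector field, coordinates ordered `S, I, D, A, R, T, H, E`. -/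
def sidartheField (α β γ δ ε ζ lam η ρ θ μ κ ν ξ σ τ : ℝ) (v : Fin 8 → ℝ) : Fin 8 → ℝ :=
  ![-v 0 * (α * v 1 + β * v 2 + γ * v 3 + δ * v 4),
    v 0 * (α * v 1 + β * v 2 + γ * v 3 + δ * v 4) - (ε + ζ + lam) * v 1,
    ε * v 1 - (η + ρ) * v 2,
    ζ * v 1 - (θ + μ + κ) * v 3,
    η * v 2 + θ * v 3 - (ν + ξ) * v 4,
    μ * v 3 + ν * v 4 - (σ + τ) * v 5,
    lam * v 1 + ρ * v 2 + κ * v 3 + ξ * v 4 + σ * v 5,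
    τ * v 5]

theorem quasiPositive_sidartheField {α β γ δ ε ζ lam η ρ θ μ κ ν ξ σ τ : ℝ}
    (hα : 0 ≤ α) (hβ : 0 ≤ β) (hγ : 0 ≤ γ) (hδ : 0 ≤ δ) (hε : 0 ≤ ε)
    (hζ : 0 ≤ ζ) (hlam : 0 ≤ lam) (hη : 0 ≤ η) (hρ : 0 ≤ ρ) (hθ : 0 ≤ θ)
    (hμ : 0 ≤ μ) (hκ : 0 ≤ κ) (hν : 0 ≤ ν) (hξ : 0 ≤ ξ) (hσ : 0 ≤ σ) (hτ : 0 ≤ τ) :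
    QuasiPositive (sidartheField α β γ δ ε ζ lam η ρ θ μ κ ν ξ σ τ) := by
  intro M
  set K := (α + β + γ + δ) * M + (ε + ζ + lam + η + ρ + θ + μ + κ + ν + ξ + σ + τ)
  refine ⟨K, fun v hv i hi hmin ↦ ?_⟩
  have hM : ∀ j, |v j| ≤ M := fun j ↦ (norm_le_pi_norm v j).trans hv
  have hM0 : 0 ≤ M := (abs_nonneg _).trans (hM i)
  have hcM : 0 ≤ (α + β + γ + δ) * M := by positivity
  have hK : ∀ c ≤ K, K * v i ≤ c * v i := fun c hc ↦ mul_le_mul_of_nonpos_right hc hi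
  have hin : ∀ j, ∀ c, 0 ≤ c → c * v i ≤ c * v j :=
    fun j c hc ↦ mul_le_mul_of_nonneg_left (hmin j) hc
  have hout : ∀ c, 0 ≤ c → 0 ≤ -(c * v i) :=
    fun c hc ↦ neg_nonneg.2 (mul_nonpos_of_nonneg_of_nonpos hc hi)
  have hinf : ∀ s ∈ Icc (v i) M,
      (α + β + γ + δ) * M * v i ≤ s * (α * v 1 + β * v 2 + γ * v 3 + δ * v 4) := by
    intro s hs
    have h := fun j ↦ le_mul_of_mem_Icc hi hM0 hs ⟨hmin j, (le_abs_self _).trans (hM j)⟩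
    linarith [mul_le_mul_of_nonneg_left (h 1) hα, mul_le_mul_of_nonneg_left (h 2) hβ,
      mul_le_mul_of_nonneg_left (h 3) hγ, mul_le_mul_of_nonneg_left (h 4) hδ]
  fin_cases i <;> simp only [Fin.zero_eta, Fin.mk_one, Fin.reduceFinMk] at * <;>
    simp only [sidartheField, Fin.isValue, Matrix.cons_val]
  · linarith [hK _ (le_add_of_nonneg_right (by positivity)),
      hinf (-v 0) ⟨by linarith, (neg_le_abs _).trans (hM 0)⟩]
  · linarith [hK _ (le_add_of_nonneg_right (by positivity)),
      hinf (v 0) ⟨hmin 0, (le_abs_self _).trans (hM 0)⟩, hout (ε + ζ + lam) (by positivity)]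
  · linarith [hK ε (by linarith), hin 1 ε hε, hout (η + ρ) (by positivity)]
  · linarith [hK ζ (by linarith), hin 1 ζ hζ, hout (θ + μ + κ) (by positivity)]
  · linarith [hK (η + θ) (by linarith), hin 2 η hη, hin 3 θ hθ, hout (ν + ξ) (by positivity)]
  · linarith [hK (μ + ν) (by linarith), hin 3 μ hμ, hin 4 ν hν, hout (σ + τ) (by positivity)]
  · linarith [hK (lam + ρ + κ + ξ + σ) (by linarith), hin 1 lam hlam, hin 2 ρ hρ,
      hin 3 κ hκ, hin 4 ξ hξ, hin 5 σ hσ]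
  · linarith [hK τ (by linarith), hin 5 τ hτ]

/-- The SIDARTHE system is positive: nonnegative initial conditions give
nonnegative solutions for all t ≥ 0. -/
theorem sidarthe_positivity
    (α β γ δ ε ζ lam η ρ θ μ κ ν ξ σ τ : ℝ)
    (hα : 0 < α) (hβ : 0 < β) (hγ : 0 < γ) (hδ : 0 < δ) (hε : 0 < ε)
    (hζ : 0 < ζ) (hlam : 0 < lam) (hη : 0 < η) (hρ : 0 < ρ) (hθ : 0 < θ)
    (hμ : 0 < μ) (hκ : 0 < κ) (hν : 0 < ν) (hξ : 0 < ξ) (hσ : 0 < σ)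
    (hτ : 0 < τ)
    (S I D A R T H E : ℝ → ℝ)
    (hS : ∀ t, HasDerivAt S (-(S t) * (α * I t + β * D t + γ * A t + δ * R t)) t)
    (hI : ∀ t, HasDerivAt I (S t * (α * I t + β * D t + γ * A t + δ * R t) - (ε + ζ + lam) * I t) t)
    (hD : ∀ t, HasDerivAt D (ε * I t - (η + ρ) * D t) t)
    (hA : ∀ t, HasDerivAt A (ζ * I t - (θ + μ + κ) * A t) t)
    (hR : ∀ t, HasDerivAt R (η * D t + θ * A t - (ν + ξ) * R t) t)
    (hT : ∀ t, HasDerivAt T (μ * A t + ν * R t - (σ + τ) * T t) t)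
    (hH : ∀ t, HasDerivAt H (lam * I t + ρ * D t + κ * A t + ξ * R t + σ * T t) t)
    (hE : ∀ t, HasDerivAt E (τ * T t) t)
    (h0 : 0 ≤ S 0 ∧ 0 ≤ I 0 ∧ 0 ≤ D 0 ∧ 0 ≤ A 0 ∧ 0 ≤ R 0 ∧ 0 ≤ T 0 ∧ 0 ≤ H 0 ∧ 0 ≤ E 0) :
    ∀ t, 0 ≤ t →
      0 ≤ S t ∧ 0 ≤ I t ∧ 0 ≤ D t ∧ 0 ≤ A t ∧ 0 ≤ R t ∧ 0 ≤ T t ∧ 0 ≤ H t ∧ 0 ≤ E t := by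
  intro t ht
  let x : ℝ → Fin 8 → ℝ := fun s ↦ ![S s, I s, D s, A s, R s, T s, H s, E s]
  have hx : ∀ s, HasDerivAt x (sidartheField α β γ δ ε ζ lam η ρ θ μ κ ν ξ σ τ (x s)) s :=
    fun s ↦ hasDerivAt_pi.2 fun j ↦ by
      fin_cases j
      exacts [hS s, hI s, hD s, hA s, hR s, hT s, hH s, hE s]
  obtain ⟨hS0, hI0, hD0, hA0, hR0, hT0, hH0, hE0⟩ := h0
  have hx0 : 0 ≤ x 0 := fun j ↦ by
    fin_cases j
    exacts [hS0, hI0, hD0, hA0, hR0, hT0, hH0, hE0]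
  have hxt := nonneg_of_hasDerivAt_of_quasiPositive (quasiPositive_sidartheField hα.le hβ.le
    hγ.le hδ.le hε.le hζ.le hlam.le hη.le hρ.le hθ.le hμ.le hκ.le hν.le hξ.le hσ.le hτ.le) hx hx0 ht
  exact ⟨hxt 0, hxt 1, hxt 2, hxt 3, hxt 4, hxt 5, hxt 6, hxt 7⟩
end

section
/- A point (S̄, Ī, D̄, Ā, R̄, T̄, H̄, Ē) with all coordinates nonnegative is an equilibrium of the SIDARTHE system if and only if Ī = D̄ = Ā = R̄ = T̄ = 0, or S̄ = Ī = D̄ = Ā = R̄ = T̄ = 0 (i.e., every equilibrium has I = D = A = R = T = 0). -/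
theorem add_mul_eq_zero_iff_of_pos {α : Type*} [Semiring α] [PartialOrder α] [IsOrderedRing α]
    [NoZeroDivisors α] {a c x : α} (ha : 0 ≤ a) (hc : 0 < c) (hx : 0 ≤ x) :
    a + c * x = 0 ↔ a = 0 ∧ x = 0 := by
  rw [add_eq_zero_iff_of_nonneg ha (mul_nonneg hc.le hx), mul_eq_zero_iff_left hc.ne']

theorem sidarthe_equilibria_general
    (α β γ δ ε ζ lam η ρ θ μ κ ν ξ σ τ : ℝ)
    (hlam : 0 < lam) (hρ : 0 < ρ)
    (hκ : 0 < κ) (hξ : 0 < ξ) (hσ : 0 < σ)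
    (S I D A R T : ℝ)
    (hI : 0 ≤ I) (hD : 0 ≤ D) (hA : 0 ≤ A) (hR : 0 ≤ R)
    (hT : 0 ≤ T) :
    (-S * (α * I + β * D + γ * A + δ * R) = 0 ∧
     S * (α * I + β * D + γ * A + δ * R) - (ε + ζ + lam) * I = 0 ∧
     ε * I - (η + ρ) * D = 0 ∧
     ζ * I - (θ + μ + κ) * A = 0 ∧
     η * D + θ * A - (ν + ξ) * R = 0 ∧
     μ * A + ν * R - (σ + τ) * T = 0 ∧
     lam * I + ρ * D + κ * A + ξ * R + σ * T = 0 ∧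
     τ * T = 0)
    ↔ (I = 0 ∧ D = 0 ∧ A = 0 ∧ R = 0 ∧ T = 0) := by
  constructor
  · -- H' is a positive combination of I, D, A, R, T, so H' = 0 alone forces all five to vanish.
    rintro ⟨-, -, -, -, -, -, hH, -⟩
    rw [add_mul_eq_zero_iff_of_pos (by positivity) hσ hT,
      add_mul_eq_zero_iff_of_pos (by positivity) hξ hR,
      add_mul_eq_zero_iff_of_pos (by positivity) hκ hA,
      add_mul_eq_zero_iff_of_pos (by positivity) hρ hD, mul_eq_zero_iff_left hlam.ne'] at hH
    tauto
  · rintro ⟨rfl, rfl, rfl, rfl, rfl⟩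
    simp

/-- A nonnegative point is an equilibrium of the SIDARTHE system iff
I = D = A = R = T = 0. -/
theorem sidarthe_equilibria
    (α β γ δ ε ζ lam η ρ θ μ κ ν ξ σ τ : ℝ)
    (hα : 0 < α) (hβ : 0 < β) (hγ : 0 < γ) (hδ : 0 < δ) (hε : 0 < ε)
    (hζ : 0 < ζ) (hlam : 0 < lam) (hη : 0 < η) (hρ : 0 < ρ) (hθ : 0 < θ)
    (hμ : 0 < μ) (hκ : 0 < κ) (hν : 0 < ν) (hξ : 0 < ξ) (hσ : 0 < σ)
    (hτ : 0 < τ)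
    (S I D A R T H E : ℝ)
    (hS : 0 ≤ S) (hI : 0 ≤ I) (hD : 0 ≤ D) (hA : 0 ≤ A) (hR : 0 ≤ R)
    (hT : 0 ≤ T) (hH : 0 ≤ H) (hE : 0 ≤ E) :
    (-S * (α * I + β * D + γ * A + δ * R) = 0 ∧
     S * (α * I + β * D + γ * A + δ * R) - (ε + ζ + lam) * I = 0 ∧
     ε * I - (η + ρ) * D = 0 ∧
     ζ * I - (θ + μ + κ) * A = 0 ∧
     η * D + θ * A - (ν + ξ) * R = 0 ∧
     μ * A + ν * R - (σ + τ) * T = 0 ∧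
     lam * I + ρ * D + κ * A + ξ * R + σ * T = 0 ∧
     τ * T = 0)
    ↔ (I = 0 ∧ D = 0 ∧ A = 0 ∧ R = 0 ∧ T = 0) :=
  sidarthe_equilibria_general α β γ δ ε ζ lam η ρ θ μ κ ν ξ σ τ hlam hρ hκ hξ hσ S I D A R T hI hD
    hA hR hT
end

section
/- The matrix F + S̄·b·cᵀ (the closed-loop IDART matrix with constant feedback gain S̄ ≥ 0) is Hurwitz (all eigenvalues have negative real part) if and only if S̄ < S̄* := r₁r₂r₃r₄ / (α r₂r₃r₄ + βε r₃r₄ + γζ r₂r₄ + δ(ηε r₃ + ζθ r₂)). -/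
/-!
Because `F` is lower triangular, `det (z - F - S̄ b cᵀ) = (z + r₅) ∏ᵢ (z + rᵢ) (1 - S̄ G(z))`, where
the transfer function `G(z) = cᵀ (z - F)⁻¹ b` is a nonnegative combination of products of factors
`(z + rᵢ)⁻¹`. On the closed right half-plane `|z + rᵢ| ≥ rᵢ`, so `|G(z)| ≤ G(0)` and there is no
root when `S̄ G(0) < 1`. Conversely, `G` decreases to `0` along `[0, ∞)`, so if `S̄ G(0) ≥ 1` the
intermediate value theorem gives a real root `t ≥ 0`. Finally `G(0) = D / (r₁ r₂ r₃ r₄)`, where `D`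
is the denominator of `S̄*`.
-/
open Matrix Filter Topology Set RCLike

section PathTransfer

variable {ι κ 𝕜 : Type*} [Fintype ι] [RCLike 𝕜] (c : ι → ℝ) (s : ι → Finset κ) (r : κ → ℝ)

/-- The transfer function of an acyclic compartmental system, as a sum over the paths `j` leaving
the input compartment: `c j` is the product of the rates along the path and `s j` the set of
compartments it visits. -/
def pathTransfer (z : 𝕜) : 𝕜 := ∑ j, (c j : 𝕜) * ∏ i ∈ s j, (z + r i)⁻¹

variable {c s r}

lemma le_norm_add_ofReal {z : 𝕜} {a : ℝ} (hz : 0 ≤ re z) : a ≤ ‖z + a‖ := by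
  calc a ≤ re (z + a) := by simpa using hz
    _ ≤ ‖z + a‖ := re_le_norm _

lemma norm_pathTransfer_le (hc : ∀ j, 0 ≤ c j) (hr : ∀ i, 0 < r i) {z : 𝕜} (hz : 0 ≤ re z) :
    ‖pathTransfer c s r z‖ ≤ pathTransfer c s r (0 : ℝ) := by
  unfold pathTransfer
  calc ‖∑ j, (c j : 𝕜) * ∏ i ∈ s j, (z + r i)⁻¹‖
      ≤ ∑ j, c j * ∏ i ∈ s j, ‖z + r i‖⁻¹ := by
        refine (norm_sum_le _ _).trans_eq (Finset.sum_congr rfl fun j _ => ?_)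
        simp [norm_prod, abs_of_nonneg (hc j)]
    _ ≤ ∑ j, c j * ∏ i ∈ s j, (0 + r i)⁻¹ := by
        gcongr with j _ i _
        · exact hc j
        · simpa using hr i
        · simpa using le_norm_add_ofReal hz

lemma pathTransfer_ofReal (t : ℝ) : pathTransfer c s r (t : 𝕜) = pathTransfer c s r t := by
  simp [pathTransfer]

lemma continuousOn_pathTransfer (hr : ∀ i, 0 < r i) :
    ContinuousOn (pathTransfer c s r : ℝ → ℝ) (Ici 0) := by
  unfold pathTransfer
  refine continuousOn_finsetSum _ fun j _ => continuousOn_const.mul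
    (continuousOn_finsetProd _ fun i _ => ?_)
  exact (continuousOn_id.add continuousOn_const).inv₀ fun t (ht : 0 ≤ t) => by
    have := hr i; simp; linarith

lemma tendsto_pathTransfer_atTop (hs : ∀ j, (s j).Nonempty) :
    Tendsto (pathTransfer c s r : ℝ → ℝ) atTop (𝓝 0) := by
  have hfactor : ∀ i, Tendsto (fun t : ℝ => (t + r i)⁻¹) atTop (𝓝 0) := fun i =>
    tendsto_inv_atTop_zero.comp (tendsto_atTop_add_const_right _ _ tendsto_id)
  have := tendsto_finsetSum Finset.univ fun j _ =>
    (tendsto_finsetProd (s j) fun i _ => hfactor i).const_mul (c j)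
  convert this using 2 with t
  · simp [pathTransfer]
  · exact (Finset.sum_eq_zero fun j _ => by
      rw [Finset.prod_eq_zero (hs j).choose_spec rfl, mul_zero]).symm

theorem forall_re_nonneg_mul_pathTransfer_ne_one_iff (hc : ∀ j, 0 ≤ c j) (hr : ∀ i, 0 < r i)
    (hs : ∀ j, (s j).Nonempty) {S : ℝ} (hS : 0 ≤ S) :
    (∀ z : 𝕜, 0 ≤ re z → (S : 𝕜) * pathTransfer c s r z ≠ 1) ↔
      S * pathTransfer c s r (0 : ℝ) < 1 := by
  constructor
  · intro h
    by_contra! hge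
    obtain ⟨T, hT, hT0⟩ := ((tendsto_pathTransfer_atTop hs).const_mul S).eventually
      (gt_mem_nhds (show S * 0 < 1 by simp)) |>.and (eventually_ge_atTop 0) |>.exists
    obtain ⟨t, ht, hgt⟩ := isPreconnected_Ici.intermediate_value (mem_Ici.2 hT0) self_mem_Ici
      ((continuousOn_pathTransfer hr).const_smul S) ⟨hT.le, hge⟩
    refine h t (by simpa using ht) ?_
    rw [pathTransfer_ofReal]
    exact_mod_cast hgt
  · intro h z hz heq
    have hle := mul_le_mul_of_nonneg_left (norm_pathTransfer_le hc hr (s := s) hz) hS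
    have hnorm : ‖(S : 𝕜) * pathTransfer c s r z‖ = 1 := by rw [heq, norm_one]
    rw [norm_mul, norm_of_nonneg hS] at hnorm
    linarith

end PathTransfer

section Idart

variable {𝕜 : Type*} [RCLike 𝕜] (α β γ δ ε ζ η θ μ ν r₁ r₂ r₃ r₄ r₅ S : ℝ)

def idartMatrix : Matrix (Fin 5) (Fin 5) ℝ :=
  !![-r₁, 0, 0, 0, 0; ε, -r₂, 0, 0, 0; ζ, 0, -r₃, 0, 0; 0, η, θ, -r₄, 0; 0, 0, μ, ν, -r₅]

/-- The paths `1`, `1 → 2`, `1 → 3`, `1 → 2 → 4`, `1 → 3 → 4`; compartment `k` has index `k - 1`. -/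
def idartTransfer : 𝕜 → 𝕜 :=
  pathTransfer ![α, β * ε, γ * ζ, δ * (η * ε), δ * (ζ * θ)]
    ![{0}, {0, 1}, {0, 2}, {0, 1, 3}, {0, 2, 3}] ![r₁, r₂, r₃, r₄]

variable {α β γ δ ε ζ η θ μ ν r₁ r₂ r₃ r₄ r₅ S}

lemma idartTransfer_apply (z : 𝕜) :
    idartTransfer α β γ δ ε ζ η θ r₁ r₂ r₃ r₄ z =
      α * (z + r₁)⁻¹ + β * ε * ((z + r₁)⁻¹ * (z + r₂)⁻¹) + γ * ζ * ((z + r₁)⁻¹ * (z + r₃)⁻¹)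
        + δ * (η * ε) * ((z + r₁)⁻¹ * ((z + r₂)⁻¹ * (z + r₄)⁻¹))
        + δ * (ζ * θ) * ((z + r₁)⁻¹ * ((z + r₃)⁻¹ * (z + r₄)⁻¹)) := by
  simp [idartTransfer, pathTransfer, Fin.sum_univ_five]
  ring

lemma idartTransfer_zero (h₁ : r₁ ≠ 0) (h₂ : r₂ ≠ 0) (h₃ : r₃ ≠ 0) (h₄ : r₄ ≠ 0) :
    idartTransfer α β γ δ ε ζ η θ r₁ r₂ r₃ r₄ (0 : ℝ) =
      (α * r₂ * r₃ * r₄ + β * ε * r₃ * r₄ + γ * ζ * r₂ * r₄ + δ * (η * ε * r₃ + ζ * θ * r₂)) /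
        (r₁ * r₂ * r₃ * r₄) := by
  simp only [idartTransfer_apply, RCLike.ofReal_real_eq_id, id, zero_add]
  field_simp
  ring

lemma det_scalar_sub_idart (z : ℂ) (h₁ : z + r₁ ≠ 0) (h₂ : z + r₂ ≠ 0) (h₃ : z + r₃ ≠ 0)
    (h₄ : z + r₄ ≠ 0) :
    (scalar (Fin 5) z - (idartMatrix ε ζ η θ μ ν r₁ r₂ r₃ r₄ r₅ +
        S • vecMulVec ![1, 0, 0, 0, 0] ![α, β, γ, δ, 0]).map Complex.ofReal).det =
      (z + r₅) * ((z + r₁) * (z + r₂) * (z + r₃) * (z + r₄)) *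
        (1 - S * idartTransfer α β γ δ ε ζ η θ r₁ r₂ r₃ r₄ z) := by
  have hclosed : idartMatrix ε ζ η θ μ ν r₁ r₂ r₃ r₄ r₅ +
      S • vecMulVec ![1, 0, 0, 0, 0] ![α, β, γ, δ, 0] =
      !![S * α - r₁, S * β, S * γ, S * δ, 0; ε, -r₂, 0, 0, 0; ζ, 0, -r₃, 0, 0;
        0, η, θ, -r₄, 0; 0, 0, μ, ν, -r₅] := by
    ext i j
    simp only [idartMatrix]
    fin_cases i <;> fin_cases j <;> simp; ring
  rw [hclosed, det_succ_column _ 4, idartTransfer_apply]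
  simp [Fin.sum_univ_succ, det_succ_row_zero, Fin.succAbove]
  field_simp
  ring

lemma idart_mem_spectrum_iff {z : ℂ} (hz : 0 ≤ z.re) (h₁ : 0 < r₁) (h₂ : 0 < r₂) (h₃ : 0 < r₃)
    (h₄ : 0 < r₄) (h₅ : 0 < r₅) :
    z ∈ spectrum ℂ ((idartMatrix ε ζ η θ μ ν r₁ r₂ r₃ r₄ r₅ +
        S • vecMulVec ![1, 0, 0, 0, 0] ![α, β, γ, δ, 0]).map Complex.ofReal) ↔
      S * idartTransfer α β γ δ ε ζ η θ r₁ r₂ r₃ r₄ z = 1 := by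
  have hne : ∀ {a : ℝ}, 0 < a → z + a ≠ 0 := fun {a} ha h =>
    ha.not_ge (by simpa [h] using le_norm_add_ofReal (z := z) (a := a) hz)
  rw [mem_spectrum_iff_isRoot_charpoly, Polynomial.IsRoot.def, eval_charpoly,
    det_scalar_sub_idart z (hne h₁) (hne h₂) (hne h₃) (hne h₄)]
  simp [hne h₁, hne h₂, hne h₃, hne h₄, hne h₅, sub_eq_zero]
  exact eq_comm

end Idart

open Matrix in
/-- The closed-loop IDART matrix F + S̄·b·cᵀ is Hurwitz iff S̄ < S̄*. -/
theorem idart_closed_loop_hurwitz_iff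
    (α β γ δ ε ζ lam η ρ θ μ κ ν ξ σ τ : ℝ)
    (hα : 0 < α) (hβ : 0 < β) (hγ : 0 < γ) (hδ : 0 < δ) (hε : 0 < ε)
    (hζ : 0 < ζ) (hlam : 0 < lam) (hη : 0 < η) (hρ : 0 < ρ) (hθ : 0 < θ)
    (hμ : 0 < μ) (hκ : 0 < κ) (hν : 0 < ν) (hξ : 0 < ξ) (hσ : 0 < σ)
    (hτ : 0 < τ)
    (r₁ r₂ r₃ r₄ r₅ : ℝ)
    (hr₁ : r₁ = ε + ζ + lam) (hr₂ : r₂ = η + ρ) (hr₃ : r₃ = θ + μ + κ)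
    (hr₄ : r₄ = ν + ξ) (hr₅ : r₅ = σ + τ)
    (F : Matrix (Fin 5) (Fin 5) ℝ)
    (hF : F = !![-r₁, 0, 0, 0, 0;
                 ε, -r₂, 0, 0, 0;
                 ζ, 0, -r₃, 0, 0;
                 0, η, θ, -r₄, 0;
                 0, 0, μ, ν, -r₅])
    (b c : Fin 5 → ℝ)
    (hb : b = ![1, 0, 0, 0, 0]) (hc : c = ![α, β, γ, δ, 0])
    (Sbar : ℝ) (hSbar : 0 ≤ Sbar) :
    (∀ z ∈ spectrum ℂ ((F + Sbar • vecMulVec b c).map (Complex.ofReal)), z.re < 0)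
    ↔ Sbar < r₁ * r₂ * r₃ * r₄ /
        (α * r₂ * r₃ * r₄ + β * ε * r₃ * r₄ + γ * ζ * r₂ * r₄
          + δ * (η * ε * r₃ + ζ * θ * r₂)) := by
  subst hF hb hc
  have h₁ : 0 < r₁ := by rw [hr₁]; positivity
  have h₂ : 0 < r₂ := by rw [hr₂]; positivity
  have h₃ : 0 < r₃ := by rw [hr₃]; positivity
  have h₄ : 0 < r₄ := by rw [hr₄]; positivity
  have h₅ : 0 < r₅ := by rw [hr₅]; positivity
  have hgain : ∀ j, 0 ≤ ![α, β * ε, γ * ζ, δ * (η * ε), δ * (ζ * θ)] j := by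
    intro j; fin_cases j <;> simp <;> positivity
  calc (∀ z ∈ spectrum ℂ _, z.re < 0)
      ↔ ∀ z : ℂ, 0 ≤ z.re → Sbar * idartTransfer α β γ δ ε ζ η θ r₁ r₂ r₃ r₄ z ≠ 1 := by
        refine forall_congr' fun z => ?_
        rw [← not_imp_not, not_lt]
        exact imp_congr_right fun hz => not_congr (idart_mem_spectrum_iff hz h₁ h₂ h₃ h₄ h₅)
    _ ↔ Sbar * idartTransfer α β γ δ ε ζ η θ r₁ r₂ r₃ r₄ (0 : ℝ) < 1 :=
        forall_re_nonneg_mul_pathTransfer_ne_one_iff hgain (by intro i; fin_cases i <;> simpa)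
          (by intro j; fin_cases j <;> simp) hSbar
    _ ↔ _ := by
        rw [idartTransfer_zero h₁.ne' h₂.ne' h₃.ne' h₄.ne', mul_div_assoc',
          div_lt_one (by positivity), lt_div_iff₀ (by positivity)]
end

section
/- Suppose x : [0,∞) → ℝ⁵ solves x' = Fx + bu with u(t) = S(t)·cᵀx(t) and S' = -S·cᵀx, where F is invertible, x(t) → 0 and S(t) → S̄ > 0 as t → ∞, and all relevant integrals converge. Then ∫₀^∞ cᵀx(φ)dφ = log(S(0)/S̄), and f₀ + R₀(S(0) - S̄) = log(S(0)/S̄), where f₀ = -cᵀF⁻¹x(0) and R₀ = -cᵀF⁻¹b. -/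
/-!
Since `S' = -S·u` with `u = cᵀx`, the product `S · exp (∫₀ᵗ u)` is constant, so
`∫₀ᵗ u = log (S(0)/S(t)) → log (S(0)/S̄)`. Adding `S·b` to `x` cancels the input,
`(x + S·b)' = F x`, so integrating over `[0, ∞)` gives `F ∫₀^∞ x = -x(0) - (S(0) - S̄) b`;
inverting `F` and pairing with `c` gives `∫₀^∞ cᵀx = f₀ + R₀ (S(0) - S̄)`.
-/

open Matrix MeasureTheory Filter Set Topology

section LinearFunctionals

variable {α ι : Type*} [MeasurableSpace α] {μ : Measure α} [Fintype ι] {f : α → ι → ℝ}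

theorem integral_dotProduct (c : ι → ℝ) (hf : Integrable f μ) :
    ∫ a, c ⬝ᵥ f a ∂μ = c ⬝ᵥ ∫ a, f a ∂μ :=
  (dotProductBilin ℝ ℝ c).toContinuousLinearMap.integral_comp_comm hf

theorem integral_mulVec (F : Matrix ι ι ℝ) (hf : Integrable f μ) :
    ∫ a, F *ᵥ f a ∂μ = F *ᵥ ∫ a, f a ∂μ :=
  F.mulVecLin.toContinuousLinearMap.integral_comp_comm hf

theorem MeasureTheory.Integrable.dotProduct (c : ι → ℝ) (hf : Integrable f μ) :
    Integrable (fun a => c ⬝ᵥ f a) μ :=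
  (dotProductBilin ℝ ℝ c).toContinuousLinearMap.integrable_comp hf

theorem MeasureTheory.Integrable.mulVec (F : Matrix ι ι ℝ) (hf : Integrable f μ) :
    Integrable (fun a => F *ᵥ f a) μ :=
  F.mulVecLin.toContinuousLinearMap.integrable_comp hf

end LinearFunctionals

section IntegratingFactor

variable {S u : ℝ → ℝ}

theorem mul_exp_intervalIntegral_eq_of_hasDerivAt (hu : Continuous u)
    (hS : ∀ t, HasDerivAt S (-S t * u t) t) (t : ℝ) :
    S t * Real.exp (∫ s in (0:ℝ)..t, u s) = S 0 := by
  have hderiv : ∀ s, HasDerivAt (fun r => S r * Real.exp (∫ v in (0:ℝ)..r, u v)) 0 s := fun s =>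
    ((hS s).fun_mul (hu.integral_hasStrictDerivAt 0 s).hasDerivAt.exp).congr_deriv (by ring)
  simpa using is_const_of_deriv_eq_zero (fun s => (hderiv s).differentiableAt)
    (fun s => (hderiv s).deriv) t 0

theorem apply_zero_ne_zero_of_tendsto (hu : Continuous u) (hS : ∀ t, HasDerivAt S (-S t * u t) t)
    {Sbar : ℝ} (hSbar : Sbar ≠ 0) (hlim : Tendsto S atTop (𝓝 Sbar)) : S 0 ≠ 0 := by
  intro hS0
  have hzero : S = 0 := funext fun t => by
    simpa [hS0, Real.exp_ne_zero] using mul_exp_intervalIntegral_eq_of_hasDerivAt hu hS t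
  rw [hzero] at hlim
  exact hSbar (tendsto_nhds_unique hlim tendsto_const_nhds)

theorem intervalIntegral_eq_log_sub_log (hu : Continuous u)
    (hS : ∀ t, HasDerivAt S (-S t * u t) t) (hS0 : S 0 ≠ 0) (t : ℝ) :
    ∫ s in (0:ℝ)..t, u s = Real.log (S 0) - Real.log (S t) := by
  have h := mul_exp_intervalIntegral_eq_of_hasDerivAt hu hS t
  have hSt : S t ≠ 0 := fun h0 => hS0 (by rw [← h, h0, zero_mul])
  rw [← h, Real.log_mul hSt (Real.exp_ne_zero _), Real.log_exp]
  ring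

theorem integral_Ioi_eq_log_div_of_hasDerivAt (hu : Continuous u)
    (hS : ∀ t, HasDerivAt S (-S t * u t) t) {Sbar : ℝ} (hSbar : Sbar ≠ 0)
    (hlim : Tendsto S atTop (𝓝 Sbar)) (hint : IntegrableOn u (Ioi 0)) :
    ∫ t in Ioi 0, u t = Real.log (S 0 / Sbar) := by
  have hS0 := apply_zero_ne_zero_of_tendsto hu hS hSbar hlim
  rw [Real.log_div hS0 hSbar]
  refine tendsto_nhds_unique (intervalIntegral_tendsto_integral_Ioi 0 hint tendsto_id) ?_
  simp_rw [intervalIntegral_eq_log_sub_log hu hS hS0]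
  exact tendsto_const_nhds.sub ((Real.continuousAt_log hSbar).tendsto.comp hlim)

end IntegratingFactor

theorem mulVec_integral_Ioi_eq_of_hasDerivAt {ι : Type*} [Fintype ι] {F : Matrix ι ι ℝ}
    {b : ι → ℝ} {x : ℝ → ι → ℝ} {S w : ℝ → ℝ} {Sbar : ℝ}
    (hx : ∀ t, HasDerivAt x (F *ᵥ x t + w t • b) t) (hS : ∀ t, HasDerivAt S (-w t) t)
    (hint : IntegrableOn x (Ioi 0)) (hxlim : Tendsto x atTop (𝓝 0))
    (hSlim : Tendsto S atTop (𝓝 Sbar)) :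
    F *ᵥ ∫ t in Ioi 0, x t = -x 0 - (S 0 - Sbar) • b := by
  have hy : ∀ t ∈ Ici (0:ℝ), HasDerivAt (fun t => x t + S t • b) (F *ᵥ x t) t := fun t _ =>
    ((hx t).add ((hS t).smul_const b)).congr_deriv (by rw [neg_smul, add_neg_cancel_right])
  have h := integral_Ioi_of_hasDerivAt_of_tendsto' hy (hint.mulVec F)
    (hxlim.add (hSlim.smul_const b))
  rw [← integral_mulVec F hint, h, zero_add]
  module

open Matrix MeasureTheory Filter in
theorem idart_final_size_relation_general
    (F : Matrix (Fin 5) (Fin 5) ℝ) (hFinv : IsUnit F.det)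
    (b c : Fin 5 → ℝ)
    (x : ℝ → Fin 5 → ℝ) (S : ℝ → ℝ)
    (hx : ∀ t i, HasDerivAt (fun t => x t i)
      ((F *ᵥ x t) i + b i * (S t * (c ⬝ᵥ x t))) t)
    (hS : ∀ t, HasDerivAt S (-(S t) * (c ⬝ᵥ x t)) t)
    (Sbar : ℝ) (hSbar : 0 < Sbar)
    (hSlim : Tendsto S atTop (nhds Sbar))
    (hxlim : Tendsto x atTop (nhds 0))
    (hxint : ∀ i, IntegrableOn (fun t => x t i) (Set.Ioi (0:ℝ))) :
    (∫ φ in Set.Ioi (0:ℝ), c ⬝ᵥ x φ) = Real.log (S 0 / Sbar) ∧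
    (-(c ⬝ᵥ (F⁻¹ *ᵥ x 0))) + (-(c ⬝ᵥ (F⁻¹ *ᵥ b))) * (S 0 - Sbar)
      = Real.log (S 0 / Sbar) := by
  have hxv : ∀ t, HasDerivAt x (F *ᵥ x t + (S t * (c ⬝ᵥ x t)) • b) t := fun t =>
    hasDerivAt_pi.2 fun i => by simpa [mul_comm] using hx t i
  have hx_int : IntegrableOn x (Ioi 0) := Integrable.of_eval hxint
  have hu : Continuous fun t => c ⬝ᵥ x t :=
    continuous_const.dotProduct (continuous_iff_continuousAt.2 fun t => (hxv t).continuousAt)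
  have hlog := integral_Ioi_eq_log_div_of_hasDerivAt hu hS hSbar.ne' hSlim
    (hx_int.dotProduct c)
  have hI : ∫ t in Ioi 0, x t = F⁻¹ *ᵥ (-x 0 - (S 0 - Sbar) • b) := by
    rw [← mulVec_integral_Ioi_eq_of_hasDerivAt hxv (fun t => by simpa using hS t) hx_int hxlim
      hSlim, mulVec_mulVec, nonsing_inv_mul F hFinv, one_mulVec]
  refine ⟨hlog, ?_⟩
  rw [← hlog, integral_dotProduct c hx_int, hI, mulVec_sub, mulVec_neg, mulVec_smul,
    dotProduct_sub, dotProduct_neg, dotProduct_smul, smul_eq_mul]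
  ring

open Matrix MeasureTheory Filter in
/-- Final-size relation: ∫₀^∞ cᵀx = log(S(0)/S̄) and
f₀ + R₀(S(0) - S̄) = log(S(0)/S̄). -/
theorem idart_final_size_relation
    (F : Matrix (Fin 5) (Fin 5) ℝ) (hFinv : IsUnit F.det)
    (b c : Fin 5 → ℝ)
    (hb : b = ![1, 0, 0, 0, 0])
    (α β γ δ : ℝ) (hc : c = ![α, β, γ, δ, 0])
    (x : ℝ → Fin 5 → ℝ) (S : ℝ → ℝ)
    (hx : ∀ t i, HasDerivAt (fun t => x t i)
      ((F *ᵥ x t) i + b i * (S t * (c ⬝ᵥ x t))) t)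
    (hS : ∀ t, HasDerivAt S (-(S t) * (c ⬝ᵥ x t)) t)
    (hS0 : 0 < S 0)
    (Sbar : ℝ) (hSbar : 0 < Sbar)
    (hSlim : Tendsto S atTop (nhds Sbar))
    (hxlim : Tendsto x atTop (nhds 0))
    (hxint : ∀ i, IntegrableOn (fun t => x t i) (Set.Ioi (0:ℝ))) :
    (∫ φ in Set.Ioi (0:ℝ), c ⬝ᵥ x φ) = Real.log (S 0 / Sbar) ∧
    (-(c ⬝ᵥ (F⁻¹ *ᵥ x 0))) + (-(c ⬝ᵥ (F⁻¹ *ᵥ b))) * (S 0 - Sbar)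
      = Real.log (S 0 / Sbar) :=
  idart_final_size_relation_general F hFinv b c x S hx hS Sbar hSbar hSlim hxlim hxint
end

section
/- For the polynomial p(s) = D(s) - S̄N(s) with 0 < S̄ < S̄* = D(0)/N(0), where D and N have positive coefficients and deg D = 5 > deg N = 4 (after cancelling the common factor (s+r₅), deg 4 > deg 3), every real root of p is negative. -/
/-!
Every summand of `N` is a nonnegative multiple of `D` divided by a product of some of the
factors `s + rᵢ`, and such a product only grows on `[0, ∞)`. Hence `N / D` decreases there,
i.e. `D(0) N(s) ≤ N(0) D(s)`, and so `S̄ N(s) < D(0) N(s) / N(0) ≤ D(s)`.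
-/

/-- With `D = P * Q`, this is `D(0) · cQ(s) ≤ cQ(0) · D(s)` for a summand `cQ` of `N`. -/
lemma mul_cofactor_le_cofactor_mul {c P₀ P Q₀ Q : ℝ} (hc : 0 ≤ c) (hQ₀ : 0 ≤ Q₀) (hQ : 0 ≤ Q)
    (hP : P₀ ≤ P) : P₀ * Q₀ * (c * Q) ≤ c * Q₀ * (P * Q) := by
  have h := mul_le_mul_of_nonneg_left hP (by positivity : 0 ≤ c * Q₀ * Q)
  linear_combination h

lemma four_factor_cross_le {a b c d e r₁ r₂ r₃ r₄ s : ℝ}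
    (ha : 0 ≤ a) (hb : 0 ≤ b) (hc : 0 ≤ c) (hd : 0 ≤ d) (he : 0 ≤ e)
    (hr₁ : 0 ≤ r₁) (hr₂ : 0 ≤ r₂) (hr₃ : 0 ≤ r₃) (hr₄ : 0 ≤ r₄) (hs : 0 ≤ s) :
    r₁ * r₂ * r₃ * r₄ * (a * ((s + r₂) * (s + r₃) * (s + r₄)) + b * ((s + r₃) * (s + r₄))
      + c * ((s + r₂) * (s + r₄)) + d * (s + r₃) + e * (s + r₂))
    ≤ (a * (r₂ * r₃ * r₄) + b * (r₃ * r₄) + c * (r₂ * r₄) + d * r₃ + e * r₂)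
      * ((s + r₁) * (s + r₂) * (s + r₃) * (s + r₄)) := by
  have ha' := mul_cofactor_le_cofactor_mul ha (by positivity : 0 ≤ r₂ * r₃ * r₄)
    (by positivity : 0 ≤ (s + r₂) * (s + r₃) * (s + r₄)) (by linarith : r₁ ≤ s + r₁)
  have hb' := mul_cofactor_le_cofactor_mul hb (by positivity : 0 ≤ r₃ * r₄)
    (by positivity : 0 ≤ (s + r₃) * (s + r₄))
    (by gcongr <;> linarith : r₁ * r₂ ≤ (s + r₁) * (s + r₂))
  have hc' := mul_cofactor_le_cofactor_mul hc (by positivity : 0 ≤ r₂ * r₄)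
    (by positivity : 0 ≤ (s + r₂) * (s + r₄))
    (by gcongr <;> linarith : r₁ * r₃ ≤ (s + r₁) * (s + r₃))
  have hd' := mul_cofactor_le_cofactor_mul hd hr₃ (by positivity : 0 ≤ s + r₃)
    (by gcongr <;> linarith : r₁ * r₂ * r₄ ≤ (s + r₁) * (s + r₂) * (s + r₄))
  have he' := mul_cofactor_le_cofactor_mul he hr₂ (by positivity : 0 ≤ s + r₂)
    (by gcongr <;> linarith : r₁ * r₃ * r₄ ≤ (s + r₁) * (s + r₃) * (s + r₄))
  linear_combination ha' + hb' + hc' + hd' + he'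

lemma sub_mul_pos_of_mul_le_mul {D₀ N₀ D N S : ℝ} (hN₀ : 0 < N₀) (hN : 0 < N)
    (hS : S < D₀ / N₀) (hcross : D₀ * N ≤ N₀ * D) : 0 < D - S * N := by
  have hD : D₀ / N₀ * N ≤ D := by
    rw [div_mul_eq_mul_div, div_le_iff₀ hN₀]
    linarith
  linarith [mul_lt_mul_of_pos_right hS hN]

theorem char_poly_no_nonneg_real_roots_general
    (α β γ δ ε ζ lam η ρ θ μ κ ν ξ : ℝ)
    (hα : 0 < α) (hβ : 0 < β) (hγ : 0 < γ) (hδ : 0 < δ) (hε : 0 < ε)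
    (hζ : 0 < ζ) (hlam : 0 < lam) (hη : 0 < η) (hρ : 0 < ρ) (hθ : 0 < θ)
    (hμ : 0 < μ) (hκ : 0 < κ) (hν : 0 < ν) (hξ : 0 < ξ)
    (r₁ r₂ r₃ r₄ : ℝ)
    (hr₁ : r₁ = ε + ζ + lam) (hr₂ : r₂ = η + ρ) (hr₃ : r₃ = θ + μ + κ)
    (hr₄ : r₄ = ν + ξ)
    (Dp Np p : ℝ → ℝ)
    (hDp : ∀ s, Dp s = (s + r₁) * (s + r₂) * (s + r₃) * (s + r₄))
    (hNp : ∀ s, Np s = α * ((s + r₂) * (s + r₃) * (s + r₄))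
      + β * ε * ((s + r₃) * (s + r₄)) + γ * ζ * ((s + r₂) * (s + r₄))
      + δ * (η * ε * (s + r₃) + ζ * θ * (s + r₂)))
    (Sbar : ℝ) (hSbar : Sbar < Dp 0 / Np 0)
    (hp : ∀ s, p s = Dp s - Sbar * Np s) :
    (∀ s, 0 ≤ s → 0 < p s) ∧ ∀ s : ℝ, p s = 0 → s < 0 := by
  have h₁ : 0 < r₁ := by rw [hr₁]; positivity
  have h₂ : 0 < r₂ := by rw [hr₂]; positivity
  have h₃ : 0 < r₃ := by rw [hr₃]; positivity
  have h₄ : 0 < r₄ := by rw [hr₄]; positivity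
  have hN : ∀ s, 0 ≤ s → 0 < Np s := fun s hs => by rw [hNp]; positivity
  have hcross : ∀ s, 0 ≤ s → Dp 0 * Np s ≤ Np 0 * Dp s := fun s hs => by
    have := four_factor_cross_le (a := α) (b := β * ε) (c := γ * ζ) (d := δ * η * ε)
      (e := δ * ζ * θ) (by positivity) (by positivity) (by positivity) (by positivity)
      (by positivity) h₁.le h₂.le h₃.le h₄.le hs
    rw [hDp, hDp, hNp, hNp]
    linear_combination this
  have hpos : ∀ s, 0 ≤ s → 0 < p s := fun s hs => by
    rw [hp]
    exact sub_mul_pos_of_mul_le_mul (hN 0 le_rfl) (hN s hs) hSbar (hcross s hs)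
  exact ⟨hpos, fun s hs₀ => not_le.mp fun hs => (hpos s hs).ne' hs₀⟩

/-- For 0 < S̄ < S̄* = D(0)/N(0), p(s) = D(s) - S̄N(s) is positive for all
s ≥ 0, hence p has no nonnegative real roots: every real root is negative. -/
theorem char_poly_no_nonneg_real_roots
    (α β γ δ ε ζ lam η ρ θ μ κ ν ξ : ℝ)
    (hα : 0 < α) (hβ : 0 < β) (hγ : 0 < γ) (hδ : 0 < δ) (hε : 0 < ε)
    (hζ : 0 < ζ) (hlam : 0 < lam) (hη : 0 < η) (hρ : 0 < ρ) (hθ : 0 < θ)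
    (hμ : 0 < μ) (hκ : 0 < κ) (hν : 0 < ν) (hξ : 0 < ξ)
    (r₁ r₂ r₃ r₄ : ℝ)
    (hr₁ : r₁ = ε + ζ + lam) (hr₂ : r₂ = η + ρ) (hr₃ : r₃ = θ + μ + κ)
    (hr₄ : r₄ = ν + ξ)
    (Dp Np p : ℝ → ℝ)
    (hDp : ∀ s, Dp s = (s + r₁) * (s + r₂) * (s + r₃) * (s + r₄))
    (hNp : ∀ s, Np s = α * ((s + r₂) * (s + r₃) * (s + r₄))
      + β * ε * ((s + r₃) * (s + r₄)) + γ * ζ * ((s + r₂) * (s + r₄))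
      + δ * (η * ε * (s + r₃) + ζ * θ * (s + r₂)))
    (Sbar : ℝ) (hSbar0 : 0 < Sbar) (hSbar : Sbar < Dp 0 / Np 0)
    (hp : ∀ s, p s = Dp s - Sbar * Np s) :
    (∀ s, 0 ≤ s → 0 < p s) ∧ ∀ s : ℝ, p s = 0 → s < 0 :=
  char_poly_no_nonneg_real_roots_general α β γ δ ε ζ lam η ρ θ μ κ ν ξ hα hβ hγ hδ hε hζ hlam hη hρ
    hθ hμ hκ hν hξ r₁ r₂ r₃ r₄ hr₁ hr₂ hr₃ hr₄ Dp Np p hDp hNp Sbar hSbar hp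
end
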